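/- Let ℏ, z ∈ ℂ with ℏ ≠ 0, and set u := (−z − ℏ/2)/(2ℏ). Assume that neither u nor u + 1/2 is a nonpositive integer (i.e. of the form −m with m ∈ ℕ). Then the function z ↦ i·G(−z) satisfies the same difference equation as G: (i·G(−z)) · (i·G(−(z+ℏ))) = 1/(z + ℏ/2). Hence i·G(−z) is an alternative non-perturbative completion of the Q-operator normalizing factor, also compatible with Baxter's TQ relation. -/

import Mathlib

open Complex

/-- The normalizing factor `G(z)` of the 't Hooft line / Q-operator. -/
noncomputable def Gnorm (ℏ z : ℂ) : ℂ :=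
  (2*ℏ) ^ (-(1/2 : ℂ)) * Complex.Gamma ((z + ℏ/2) / (2*ℏ)) /
    Complex.Gamma ((z + 3*ℏ/2) / (2*ℏ))

/-
With `v = (z + ℏ/2)/(2ℏ)` one has `G(z) = (2ℏ)^(-1/2) Γ(v)/Γ(v + 1/2)` and
`G(z + ℏ) = (2ℏ)^(-1/2) Γ(v + 1/2)/Γ(v + 1)`, so the product telescopes to
`(2ℏ)⁻¹ Γ(v)/Γ(v + 1) = 1/(2ℏ v) = 1/(z + ℏ/2)`. Applied at `-(z + ℏ)` (where `v = u`) this is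
the difference equation for `G(-z)` with the opposite sign, which the factor `i² = -1` repairs.
-/

theorem Complex.cpow_neg_half_mul_self {x : ℂ} (hx : x ≠ 0) :
    x ^ (-(1/2 : ℂ)) * x ^ (-(1/2 : ℂ)) = x⁻¹ := by
  rw [← cpow_add _ _ hx]
  norm_num [cpow_neg_one]

theorem Complex.Gamma_div_Gamma_add_one {s : ℂ} (hs : ∀ m : ℕ, s ≠ -m) :
    Gamma s / Gamma (s + 1) = s⁻¹ := by
  have hs0 : s ≠ 0 := by simpa using hs 0
  rw [Gamma_add_one s hs0, div_mul_cancel_right₀ (Gamma_ne_zero hs)]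

theorem Gnorm_eq {ℏ v : ℂ} (hℏ : ℏ ≠ 0) {z : ℂ} (hv : (z + ℏ/2) / (2*ℏ) = v) :
    Gnorm ℏ z = (2*ℏ) ^ (-(1/2 : ℂ)) * Gamma v / Gamma (v + 1/2) := by
  rw [Gnorm, ← hv]
  congr 3
  field_simp
  ring

theorem Gnorm_mul_Gnorm_add (ℏ z : ℂ)
    (h1 : ∀ m : ℕ, (z + ℏ/2) / (2*ℏ) ≠ -m) (h2 : ∀ m : ℕ, (z + ℏ/2) / (2*ℏ) + 1/2 ≠ -m) :
    Gnorm ℏ z * Gnorm ℏ (z + ℏ) = 1 / (z + ℏ/2) := by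
  obtain ⟨v, hv⟩ : ∃ v, (z + ℏ/2) / (2*ℏ) = v := ⟨_, rfl⟩
  rw [hv] at h1 h2
  have hv0 : v ≠ 0 := by simpa using h1 0
  have h2ℏ : 2*ℏ ≠ 0 := (div_ne_zero_iff.mp (hv ▸ hv0)).2
  have hℏ : ℏ ≠ 0 := right_ne_zero_of_mul h2ℏ
  have hv_shift : (z + ℏ + ℏ/2) / (2*ℏ) = v + 1/2 := by rw [← hv]; field_simp; ring
  calc Gnorm ℏ z * Gnorm ℏ (z + ℏ)
      = ((2*ℏ) ^ (-(1/2 : ℂ)) * (2*ℏ) ^ (-(1/2 : ℂ))) * (Gamma v / Gamma (v + 1)) := by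
        rw [Gnorm_eq hℏ hv, Gnorm_eq hℏ hv_shift, add_assoc v, add_halves]
        have hg := Gamma_ne_zero h2
        generalize Gamma (v + 1/2) = g at hg
        field_simp
    _ = (2*ℏ)⁻¹ * v⁻¹ := by rw [cpow_neg_half_mul_self h2ℏ, Gamma_div_Gamma_add_one h1]
    _ = 1 / (z + ℏ/2) := by rw [← hv]; field_simp

theorem I_Gnorm_neg_difference_equation_general (ℏ z : ℂ)
    (u : ℂ) (hu : u = (-z - ℏ/2) / (2*ℏ))
    (h1 : ∀ m : ℕ, u ≠ -(m : ℂ)) (h2 : ∀ m : ℕ, u + 1/2 ≠ -(m : ℂ)) :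
    (Complex.I * Gnorm ℏ (-z)) * (Complex.I * Gnorm ℏ (-(z + ℏ))) = 1 / (z + ℏ/2) := by
  have hu' : (-(z + ℏ) + ℏ/2) / (2*ℏ) = u := by rw [hu]; ring
  have key := Gnorm_mul_Gnorm_add ℏ (-(z + ℏ)) (hu' ▸ h1) (hu' ▸ h2)
  rw [show -(z + ℏ) + ℏ = -z by ring, show -(z + ℏ) + ℏ/2 = -(z + ℏ/2) by ring,
    one_div_neg_eq_neg_one_div] at key
  calc (I * Gnorm ℏ (-z)) * (I * Gnorm ℏ (-(z + ℏ)))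
      = -(Gnorm ℏ (-(z + ℏ)) * Gnorm ℏ (-z)) := by
        linear_combination (Gnorm ℏ (-z) * Gnorm ℏ (-(z + ℏ))) * I_mul_I
    _ = 1 / (z + ℏ/2) := by rw [key, neg_neg]

/-- the alternative non-perturbative completion `i·G(−z)` satisfies the
same difference equation as `G`: `(i G(−z)) (i G(−(z+ℏ))) = 1/(z + ℏ/2)`. -/
theorem I_Gnorm_neg_difference_equation (ℏ z : ℂ) (hℏ : ℏ ≠ 0)
    (u : ℂ) (hu : u = (-z - ℏ/2) / (2*ℏ))
    (h1 : ∀ m : ℕ, u ≠ -(m : ℂ)) (h2 : ∀ m : ℕ, u + 1/2 ≠ -(m : ℂ)) :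
    (Complex.I * Gnorm ℏ (-z)) * (Complex.I * Gnorm ℏ (-(z + ℏ))) = 1 / (z + ℏ/2) :=
  I_Gnorm_neg_difference_equation_general ℏ z u hu h1 h2
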